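/- Let A be an n×n real symmetric positive definite matrix, B an m×n real matrix, and R an m×m real symmetric positive definite matrix; set C = 0 (undrained incompressible limit), M = [[A, −Bᵀ],[0, R]] and J = [[A, −Bᵀ],[B, 0]]. Suppose the discretization is not inf-sup stable, i.e. there exists p ∈ ℝᵐ, p ≠ 0, with Bᵀ p = 0. Then the vector x = (0, p) satisfies J x = 0, and hence the fixed-stress error-propagation (iteration) matrix T = I − M⁻¹ J satisfies T x = x; in particular 1 is an eigenvalue of T and the spectral radius of T is at least 1, so the fixed-stress iteration error on the spurious pressure mode (0,p) is unchanged at every sequential iteration. -/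
import Mathlib


/-- In the undrained incompressible limit, a spurious pressure mode p ≠ 0 with
Bᵀp = 0 gives a vector x = (0,p) in the kernel of the saddle-point matrix J, the
fixed-stress error propagation matrix T = I − M⁻¹J fixes x (so 1 is an eigenvalue
of T and its spectral radius is at least 1), and the iteration error on x is
unchanged at every sequential iteration. -/
theorem fixed_stress_spurious_mode_not_damped
    (n m : ℕ) (A : Matrix (Fin n) (Fin n) ℝ) (hA : A.PosDef)
    (B : Matrix (Fin m) (Fin n) ℝ)
    (R : Matrix (Fin m) (Fin m) ℝ) (hR : R.PosDef)
    (M J : Matrix (Fin n ⊕ Fin m) (Fin n ⊕ Fin m) ℝ)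
    (hM : M = Matrix.fromBlocks A (-B.transpose) 0 R)
    (hJ : J = Matrix.fromBlocks A (-B.transpose) B 0)
    (T : Matrix (Fin n ⊕ Fin m) (Fin n ⊕ Fin m) ℝ)
    (hT : T = 1 - M⁻¹ * J)
    (p : Fin m → ℝ) (hp : p ≠ 0) (hBp : B.transpose.mulVec p = 0) :
    J.mulVec (Sum.elim (0 : Fin n → ℝ) p) = 0 ∧
    T.mulVec (Sum.elim (0 : Fin n → ℝ) p) = Sum.elim (0 : Fin n → ℝ) p ∧
    Module.End.HasEigenvalue T.mulVecLin 1 ∧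
    (1 : ENNReal) ≤ spectralRadius ℝ T ∧
    ∀ k : ℕ, (T ^ k).mulVec (Sum.elim (0 : Fin n → ℝ) p) = Sum.elim (0 : Fin n → ℝ) p := by
  set x : Fin n ⊕ Fin m → ℝ := Sum.elim (0 : Fin n → ℝ) p with hx
  have hxne : x ≠ 0 := by
    intro h
    apply hp
    funext i
    have := congrFun h (Sum.inr i)
    simpa [hx] using this
  have hJx : J.mulVec x = 0 := by
    subst hJ
    rw [hx, Matrix.fromBlocks_mulVec]
    have h1 : Sum.elim (0 : Fin n → ℝ) p ∘ Sum.inl = 0 := rfl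
    have h2 : Sum.elim (0 : Fin n → ℝ) p ∘ Sum.inr = p := rfl
    simp [h1, h2, Matrix.mulVec_zero, Matrix.neg_mulVec, hBp]
  have hTx : T.mulVec x = x := by
    rw [hT, Matrix.sub_mulVec, Matrix.one_mulVec, ← Matrix.mulVec_mulVec, hJx,
      Matrix.mulVec_zero, sub_zero]
  have heig : Module.End.HasEigenvalue T.mulVecLin 1 := by
    apply Module.End.hasEigenvalue_of_hasEigenvector (x := x)
    refine ⟨?_, hxne⟩
    rw [Module.End.mem_eigenspace_iff]
    simpa [Matrix.mulVecLin] using hTx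
  have hspec : (1 : ℝ) ∈ spectrum ℝ T := by
    have := Module.End.hasEigenvalue_iff_mem_spectrum.mp heig
    have he : spectrum ℝ (Matrix.toLinAlgEquiv' T) = spectrum ℝ T :=
      AlgEquiv.spectrum_eq _ _
    have hEq : (Matrix.toLinAlgEquiv' T : ((Fin n ⊕ Fin m) → ℝ) →ₗ[ℝ] _) = T.mulVecLin :=
      LinearMap.ext fun v => rfl
    rw [← he, hEq]
    exact this
  refine ⟨hJx, hTx, heig, ?_, ?_⟩
  · have : ((1 : NNReal) : ENNReal) ≤ spectralRadius ℝ T := by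
      have h := le_iSup₂ (f := fun k (_ : k ∈ spectrum ℝ T) => (‖k‖₊ : ENNReal)) 1 hspec
      simpa [spectralRadius] using h
    simpa using this
  · intro k
    induction k with
    | zero => simp
    | succ k ih =>
      rw [pow_succ, ← Matrix.mulVec_mulVec, hTx, ih]
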